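/- Descendant-multiset decomposition under replacement: Let N be an AST root in which every node occurs at most once, let R ∈ D(N), and let R' be a node with R ∉ D(R'). Then, as an identity of generalized multisets, D(N[R\R']) = ((D(N) ⊖ D(R)) ⊕ D(R'))[R\R']. -/

import Mathlib

open Classical
noncomputable section

/-! ### Abstract syntax trees -/

/-- An AST node: a label, an attribute map, and a list of children.  The type
`Attr` stands for the finite partial attribute maps `Σ_M ⇀ 𝔻`. -/
inductive ASTNode (L : Type) (Attr : Type) : Type where
  | mk : L → Attr → List (ASTNode L Attr) → ASTNode L Attr

namespace ASTNode

variable {L Attr : Type}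

def label : ASTNode L Attr → L
  | .mk ℓ _ _ => ℓ

def attrs : ASTNode L Attr → Attr
  | .mk _ A _ => A

def children : ASTNode L Attr → List (ASTNode L Attr)
  | .mk _ _ ns => ns

end ASTNode

/-! ### Scopes -/

/-- A scope: a partial map from node variables to attribute maps. -/
def Scope (I : Type) (Attr : Type) := I → Option Attr

def emptyScope {I Attr : Type} : Scope I Attr := fun _ => none

/-- Left-biased union of scopes. -/
def Scope.union {I Attr : Type} (Γ₁ Γ₂ : Scope I Attr) : Scope I Attr :=
  fun i => (Γ₁ i).orElse (fun _ => Γ₂ i)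

/-- `{i ↦ A} ∪ Γ`. -/
def Scope.insert {I Attr : Type} (i : I) (A : Attr) (Γ : Scope I Attr) : Scope I Attr :=
  fun j => if j = i then some A else Γ j

/-! ### Pattern queries -/

/-- Pattern queries: `AnyNode`, or `Match(ℓ, i, [q₁,…,qₙ], θ)` with `θ` a Boolean
predicate on scopes. -/
inductive Pattern (L : Type) (Attr : Type) (I : Type) : Type where
  | any : Pattern L Attr I
  | node : L → I → List (Pattern L Attr I) → (Scope I Attr → Bool) → Pattern L Attr I

variable {L Attr I : Type}

mutual
/-- Pattern evaluation `⟦q(N)⟧`, returning a Boolean and a scope. -/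
def evalPattern : Pattern L Attr I → ASTNode L Attr → Bool × Scope I Attr
  | .any, _ => (true, emptyScope)
  | .node ℓq i qs θ, .mk ℓ A ns =>
      match evalChildren qs ns with
      | none => (false, emptyScope)
      | some Γc =>
          let Γ : Scope I Attr := Scope.insert i A Γc
          if ℓq = ℓ ∧ θ Γ = true then (true, Γ) else (false, emptyScope)

/-- Evaluate the children: succeeds (returning the union of the child scopes)
iff the lists have equal length and every child pattern matches. -/
def evalChildren : List (Pattern L Attr I) → List (ASTNode L Attr) → Option (Scope I Attr)
  | [], [] => some emptyScope
  | q :: qs, n :: ns =>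
      match evalPattern q n, evalChildren qs ns with
      | (true, Γ₁), some Γ₂ => some (Γ₁.union Γ₂)
      | _, _ => none
  | _, _ => none
end

mutual
/-- The descendants `D(N)` of a node (as a list). -/
def ASTNode.descendants : ASTNode L Attr → List (ASTNode L Attr)
  | .mk ℓ A ns => .mk ℓ A ns :: descendantsList ns

def descendantsList : List (ASTNode L Attr) → List (ASTNode L Attr)
  | [] => []
  | n :: ns => n.descendants ++ descendantsList ns
end

/-- The match set `q(N)`: descendants of `N` on which `q` evaluates to true. -/
def matchSet (q : Pattern L Attr I) (N : ASTNode L Attr) : Set (ASTNode L Attr) :=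
  {N' | N' ∈ N.descendants ∧ ∃ Γ, evalPattern q N' = (true, Γ)}

/-! ### Generalized multisets -/

/-- Lift a list (in particular, a set given as a duplicate-free list) to the
generalized multiset counting occurrences. -/
def listGM (l : List (ASTNode L Attr)) : ASTNode L Attr →₀ ℤ :=
  (l.map (fun x => Finsupp.single x (1 : ℤ))).sum

/-- A view `V_q` is correct for `N` if it maps elements of `q(N)` to `1` and all
other nodes to `0`. -/
def CorrectView (q : Pattern L Attr I) (N : ASTNode L Attr) (V : ASTNode L Attr →₀ ℤ) : Prop :=
  ∀ x, V x = if x ∈ matchSet q N then 1 else 0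

/-- `IVM(q, V, Δ)`: add `Δ(x)` to `V(x)` at every `x` on which `q` evaluates to true. -/
def IVM (q : Pattern L Attr I) (V Δ : ASTNode L Attr →₀ ℤ) : ASTNode L Attr →₀ ℤ :=
  V + Δ.filter (fun x => (evalPattern q x).1 = true)

/-! ### Replacement, depth, ancestors -/

mutual
/-- The replacement `N[R\R']`. -/
def ASTNode.repl (R R' : ASTNode L Attr) : ASTNode L Attr → ASTNode L Attr
  | .mk ℓ A ns =>
      if ASTNode.mk ℓ A ns = R then R' else .mk ℓ A (replList R R' ns)

def replList (R R' : ASTNode L Attr) : List (ASTNode L Attr) → List (ASTNode L Attr)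
  | [] => []
  | n :: ns => ASTNode.repl R R' n :: replList R R' ns
end

mutual
/-- The depth `dep(q)` of a pattern. -/
def Pattern.depth : Pattern L Attr I → ℕ
  | .any => 0
  | .node _ _ qs _ => 1 + depthList qs

def depthList : List (Pattern L Attr I) → ℕ
  | [] => 0
  | q :: qs => max q.depth (depthList qs)
end

/-- `descAt d N M`: `M` is a descendant of `N` at distance exactly `d`. -/
def descAt : ℕ → ASTNode L Attr → ASTNode L Attr → Prop
  | 0, N, M => N = M
  | d + 1, N, M => ∃ c ∈ N.children, descAt d c M

/-- The generalized multiset `{| Aⁱ(R) ↦ 1 : 1 ≤ i ≤ d, Aⁱ(R) exists relative to N |}`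
of ancestors of `R` (in `N`) at distances `1,…,d`. -/
def ancestorsGM (N R : ASTNode L Attr) (d : ℕ) : ASTNode L Attr →₀ ℤ :=
  ∑ i ∈ Finset.Icc 1 d, listGM (N.descendants.filter (fun A => decide (descAt i A R)))

/-- The maximal search set `⌈R, R'⌉_q` (ancestors of `R` are taken in `N`,
ancestors of `R'` in `N[R\R']`). -/
def maxSearchSet (q : Pattern L Attr I) (N R R' : ASTNode L Attr) : ASTNode L Attr →₀ ℤ :=
  listGM R.descendants + ancestorsGM N R q.depth
    - listGM R'.descendants - ancestorsGM (N.repl R R') R' q.depth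

/-! ### Node generators -/

/-- Node generators: `Reuse(i)` or `Gen(ℓ, ā, [g₁,…,gₙ])`, where the attribute
expressions `ā` are collectively a function from scopes to attribute maps. -/
inductive NodeGen (L : Type) (Attr : Type) (I : Type) : Type where
  | reuse : I → NodeGen L Attr I
  | gen : L → (Scope I Attr → Attr) → List (NodeGen L Attr I) → NodeGen L Attr I

mutual
/-- Generator evaluation `⟦g⟧_{Γ,μ}`. -/
def evalGen (Γ : Scope I Attr) (μ : I → ASTNode L Attr) : NodeGen L Attr I → ASTNode L Attr
  | .reuse i => μ i
  | .gen ℓ a gs => .mk ℓ (a Γ) (evalGenList Γ μ gs)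

def evalGenList (Γ : Scope I Attr) (μ : I → ASTNode L Attr) :
    List (NodeGen L Attr I) → List (ASTNode L Attr)
  | [] => []
  | g :: gs => evalGen Γ μ g :: evalGenList Γ μ gs
end

mutual
/-- The matched node pairs `MP(q, R)`. -/
def MP : Pattern L Attr I → ASTNode L Attr → List (Pattern L Attr I × ASTNode L Attr)
  | .any, R => [(.any, R)]
  | .node ℓ i qs θ, .mk ℓ' A ns => (.node ℓ i qs θ, .mk ℓ' A ns) :: MPList qs ns

def MPList : List (Pattern L Attr I) → List (ASTNode L Attr) →
    List (Pattern L Attr I × ASTNode L Attr)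
  | q :: qs, n :: ns => MP q n ++ MPList qs ns
  | _, _ => []
end

mutual
/-- The generated node pairs `GP(g, Γ, μ)`. -/
def GP (Γ : Scope I Attr) (μ : I → ASTNode L Attr) :
    NodeGen L Attr I → List (NodeGen L Attr I × ASTNode L Attr)
  | .reuse i => [(.reuse i, μ i)]
  | .gen ℓ a gs => (.gen ℓ a gs, evalGen Γ μ (.gen ℓ a gs)) :: GPList Γ μ gs

def GPList (Γ : Scope I Attr) (μ : I → ASTNode L Attr) :
    List (NodeGen L Attr I) → List (NodeGen L Attr I × ASTNode L Attr)
  | [] => []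
  | g :: gs => GP Γ μ g ++ GPList Γ μ gs
end

/-- A generator `g` is safe for `(q, R)` with scopes `Γ, μ`: it reuses exactly
the wildcard-matched subtrees of `R`. -/
def SafeGen (q : Pattern L Attr I) (R : ASTNode L Attr) (g : NodeGen L Attr I)
    (Γ : Scope I Attr) (μ : I → ASTNode L Attr) : Prop :=
  ∀ N : ASTNode L Attr,
    (Pattern.any, N) ∈ MP q R ↔ ∃ i, μ i = N ∧ (NodeGen.reuse i, N) ∈ GP Γ μ g

mutual
/-- `|g|`: the number of `Gen` and `Reuse` terms in `g`. -/
def NodeGen.size : NodeGen L Attr I → ℕ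
  | .reuse _ => 1
  | .gen _ _ gs => 1 + sizeGenList gs

def sizeGenList : List (NodeGen L Attr I) → ℕ
  | [] => 0
  | g :: gs => g.size + sizeGenList gs
end

mutual
/-- `|q|`: the number of `Match` and `AnyNode` terms in `q`. -/
def Pattern.size : Pattern L Attr I → ℕ
  | .any => 1
  | .node _ _ qs _ => 1 + sizePatList qs

def sizePatList : List (Pattern L Attr I) → ℕ
  | [] => 0
  | q :: qs => q.size + sizePatList qs
end

/-! ### Paths, occurrences, alignment -/

/-- The node reached from `N` by following the child-index path `π`. -/
def nodeAt (N : ASTNode L Attr) (π : List ℕ) : Option (ASTNode L Attr) :=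
  match π with
  | [] => some N
  | k :: π' => (N.children[k]?).bind fun c => nodeAt c π'

/-- The subpattern occurrence of `q` located at the child-index path `π`. -/
def subAt (q : Pattern L Attr I) (π : List ℕ) : Option (Pattern L Attr I) :=
  match π, q with
  | [], q => some q
  | _ :: _, .any => none
  | k :: π', .node _ _ qs _ => (qs[k]?).bind fun qk => subAt qk π'

/-- `π` is an occurrence of a `Match` subpattern with node variable `i`. -/
def IsMatchVarOcc (q : Pattern L Attr I) (π : List ℕ) (i : I) : Prop :=
  ∃ ℓ qs θ, subAt q π = some (.node ℓ i qs θ)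

/-- `π` is an occurrence of a `Match` subpattern of `q`. -/
def IsMatchOcc (q : Pattern L Attr I) (π : List ℕ) : Prop :=
  ∃ i, IsMatchVarOcc q π i

/-- The node variables of the `Match` subpatterns of `q`. -/
def patVars (q : Pattern L Attr I) : Set I :=
  {i | ∃ π, IsMatchVarOcc q π i}

/-- The scope `Γ_σ` induced by an assignment `σ` of nodes to (paths of)
`Match`-subpattern occurrences of `q`: it maps the node variable of each
`Match` subpattern to the attribute map of the assigned node. -/
def scopeOf (q : Pattern L Attr I) (σ : List ℕ → ASTNode L Attr) : Scope I Attr :=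
  fun i => if h : ∃ π, IsMatchVarOcc q π i then some (σ h.choose).attrs else none

mutual
/-- Structural alignment at depth 0. -/
def align0 : Pattern L Attr I → NodeGen L Attr I → Bool
  | .any, _ => true
  | _, .reuse _ => true
  | .node ℓ _ qs _, .gen ℓ' _ gs =>
      if ℓ = ℓ' ∧ qs.length = gs.length then align0List qs gs else false

def align0List : List (Pattern L Attr I) → List (NodeGen L Attr I) → Bool
  | [], [] => true
  | q :: qs, g :: gs => align0 q g && align0List qs gs
  | _, _ => false
end

/-- Structural alignment at depth `d`. -/
def alignD : ℕ → Pattern L Attr I → NodeGen L Attr I → Bool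
  | 0, q, g => align0 q g
  | _ + 1, .any, _ => false
  | d + 1, .node _ _ qs _, g => qs.attach.any (fun qk => alignD d qk.1 g)

end

section DescendantsRepl

variable {L Attr : Type}

mutual
theorem ASTNode.descendants_subset_of_mem {M N : ASTNode L Attr} (h : M ∈ N.descendants) :
    M.descendants ⊆ N.descendants := by
  cases N with
  | mk ℓ A ns =>
    rw [ASTNode.descendants] at h ⊢
    rcases List.mem_cons.mp h with rfl | h
    · exact List.Subset.refl _
    · exact List.Subset.trans (descendantsList_subset_of_mem h) (List.subset_cons_self _ _)

theorem descendantsList_subset_of_mem {M : ASTNode L Attr} {ns : List (ASTNode L Attr)}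
    (h : M ∈ descendantsList ns) : M.descendants ⊆ descendantsList ns := by
  cases ns with
  | nil => simp [descendantsList] at h
  | cons n ns =>
    rw [descendantsList] at h ⊢
    rcases List.mem_append.mp h with h | h
    · exact List.Subset.trans (ASTNode.descendants_subset_of_mem h) (List.subset_append_left _ _)
    · exact List.Subset.trans (descendantsList_subset_of_mem h) (List.subset_append_right _ _)
end

mutual
theorem ASTNode.repl_of_not_mem_descendants (R' : ASTNode L Attr) {R N : ASTNode L Attr}
    (h : R ∉ N.descendants) : ASTNode.repl R R' N = N := by
  cases N with
  | mk ℓ A ns =>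
    rw [ASTNode.descendants, List.mem_cons, not_or] at h
    rw [ASTNode.repl, if_neg (Ne.symm h.1), replList_of_not_mem_descendantsList R' h.2]

theorem replList_of_not_mem_descendantsList (R' : ASTNode L Attr) {R : ASTNode L Attr}
    {ns : List (ASTNode L Attr)} (h : R ∉ descendantsList ns) : replList R R' ns = ns := by
  cases ns with
  | nil => rfl
  | cons n ns =>
    rw [descendantsList, List.mem_append, not_or] at h
    rw [replList, ASTNode.repl_of_not_mem_descendants R' h.1,
      replList_of_not_mem_descendantsList R' h.2]
end

theorem ASTNode.descendants_map_repl_of_not_mem (R' : ASTNode L Attr) {R N : ASTNode L Attr}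
    (h : R ∉ N.descendants) : N.descendants.map (ASTNode.repl R R') = N.descendants :=
  (List.map_congr_left fun _ hM => ASTNode.repl_of_not_mem_descendants R'
    fun hR => h (ASTNode.descendants_subset_of_mem hM hR)).trans (List.map_id _)

theorem descendantsList_map_repl_of_not_mem (R' : ASTNode L Attr) {R : ASTNode L Attr}
    {ns : List (ASTNode L Attr)} (h : R ∉ descendantsList ns) :
    (descendantsList ns).map (ASTNode.repl R R') = descendantsList ns :=
  (List.map_congr_left fun _ hM => ASTNode.repl_of_not_mem_descendants R'
    fun hR => h (descendantsList_subset_of_mem hM hR)).trans (List.map_id _)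

theorem listGM_cons (a : ASTNode L Attr) (l : List (ASTNode L Attr)) :
    listGM (a :: l) = Finsupp.single a 1 + listGM l := by
  simp [listGM]

theorem listGM_append (l₁ l₂ : List (ASTNode L Attr)) :
    listGM (l₁ ++ l₂) = listGM l₁ + listGM l₂ := by
  simp [listGM]

theorem mapDomain_listGM (f : ASTNode L Attr → ASTNode L Attr) (l : List (ASTNode L Attr)) :
    Finsupp.mapDomain f (listGM l) = listGM (l.map f) := by
  induction l with
  | nil => simp [listGM]
  | cons a l ih =>
    rw [List.map_cons, listGM_cons, listGM_cons, Finsupp.mapDomain_add,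
      Finsupp.mapDomain_single, ih]

/- With `D(R)[R\R']` moved to the left, the identity needs no subtraction and follows along the
tree: uniqueness of `R` puts it in exactly one child, and the other children are left unchanged
by the replacement. -/
mutual
theorem ASTNode.listGM_descendants_repl_add (R R' : ASTNode L Attr) {N : ASTNode L Attr}
    (hN : N.descendants.Nodup) (hR : R ∈ N.descendants) :
    listGM (ASTNode.repl R R' N).descendants + listGM (R.descendants.map (ASTNode.repl R R')) =
      listGM (N.descendants.map (ASTNode.repl R R')) + listGM R'.descendants := by
  cases N with
  | mk ℓ A ns =>
    by_cases hNR : ASTNode.mk ℓ A ns = R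
    · rw [ASTNode.repl, if_pos hNR, ← hNR, add_comm]
    · rw [ASTNode.descendants] at hN hR
      have hRns : R ∈ descendantsList ns := (List.mem_cons.mp hR).resolve_left (Ne.symm hNR)
      have hrepl : ASTNode.repl R R' (.mk ℓ A ns) = .mk ℓ A (replList R R' ns) := by
        rw [ASTNode.repl, if_neg hNR]
      rw [hrepl, ASTNode.descendants, ASTNode.descendants, List.map_cons, hrepl, listGM_cons,
        listGM_cons, add_assoc, add_assoc,
        listGM_descendantsList_replList_add R R' hN.of_cons hRns]

theorem listGM_descendantsList_replList_add (R R' : ASTNode L Attr)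
    {ns : List (ASTNode L Attr)} (hN : (descendantsList ns).Nodup) (hR : R ∈ descendantsList ns) :
    listGM (descendantsList (replList R R' ns)) + listGM (R.descendants.map (ASTNode.repl R R')) =
      listGM ((descendantsList ns).map (ASTNode.repl R R')) + listGM R'.descendants := by
  cases ns with
  | nil => simp [descendantsList] at hR
  | cons n ns =>
    rw [descendantsList] at hN hR
    obtain ⟨hn, hns, hdisj⟩ := List.nodup_append'.mp hN
    rw [replList, descendantsList, descendantsList, List.map_append, listGM_append, listGM_append]
    by_cases hRn : R ∈ n.descendants
    · have hRns : R ∉ descendantsList ns := hdisj hRn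
      rw [replList_of_not_mem_descendantsList R' hRns, descendantsList_map_repl_of_not_mem R' hRns,
        add_right_comm, ASTNode.listGM_descendants_repl_add R R' hn hRn, add_right_comm]
    · have hRns : R ∈ descendantsList ns := (List.mem_append.mp hR).resolve_left hRn
      rw [ASTNode.repl_of_not_mem_descendants R' hRn,
        ASTNode.descendants_map_repl_of_not_mem R' hRn, add_assoc,
        listGM_descendantsList_replList_add R R' hns hRns, add_assoc]
end

end DescendantsRepl

/-- **Descendant-multiset decomposition under replacement.** If
every node occurs at most once in `N`, `R ∈ D(N)`, and `R ∉ D(R')`, then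
`D(N[R\R']) = ((D(N) ⊖ D(R)) ⊕ D(R'))[R\R']` as generalized multisets. -/
theorem descendants_repl_decomposition {L Attr : Type}
    (N R R' : ASTNode L Attr)
    (hN : N.descendants.Nodup)
    (hR : R ∈ N.descendants)
    (hR' : R ∉ R'.descendants) :
    listGM (ASTNode.repl R R' N).descendants =
      Finsupp.mapDomain (ASTNode.repl R R')
        (listGM N.descendants - listGM R.descendants + listGM R'.descendants) := by
  rw [Finsupp.mapDomain_add, Finsupp.mapDomain_sub, mapDomain_listGM, mapDomain_listGM,
    mapDomain_listGM, ASTNode.descendants_map_repl_of_not_mem R' hR', sub_add_eq_add_sub,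
    eq_sub_iff_add_eq]
  exact ASTNode.listGM_descendants_repl_add R R' hN hR
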